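/- Let β, c be real parameters. For every natural number n and every real x ≠ 0, the generalized Dunkl operator 𝔇 acts on the basis function Φ_n by (𝔇 Φ_n)(x) = ν_n Φ_{n−1}(x) (with the convention Φ_{−1} = 0), where ν_n = (1−c)n if n is even and ν_n = (c+1)(β+n) if n is odd. -/

import Mathlib

/-! On even functions the reflection terms of `𝔇` collapse: `f(x) - f(-x) = 0` and
`f'(-x) = -f'(x)`, so `𝔇 f = (B + C) f' = (1 - c)(x + c)/x · f'`, and differentiating
`Φ_{2m} = (x² - c²)^m` gives the even case at once. The odd case is a direct computation,
using `(x + c)(c - x) = -(x² - c²)` to merge the two derivative terms. -/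

noncomputable section

/-- The generalized Dunkl operator `𝔇`: acts on `f` at `x ≠ 0` by
`A(x)(f(x) - f(-x)) + B(x) f'(x) - C(x) f'(-x)` (the last term being `C(x)` times
minus the value at `x` of the derivative of the reflection `t ↦ f (-t)`). -/
noncomputable def Dop (β c : ℝ) (f : ℝ → ℝ) (x : ℝ) : ℝ :=
  (c ^ 2 / x ^ 3 - c * (c - 1) / (2 * x ^ 2) + β * (c + 1) / (2 * x)) * (f x - f (-x))
    + ((x ^ 2 - c ^ 2) / x ^ 2) * deriv f x
    - (c * (x + c) * (1 - x) / x ^ 2) * deriv f (-x)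

/-- The canonical polynomial basis `Φ_n`. -/
noncomputable def Phi (c : ℝ) (n : ℕ) (x : ℝ) : ℝ :=
  if Even n then (x ^ 2 - c ^ 2) ^ (n / 2)
  else (x + c) * (x ^ 2 - c ^ 2) ^ ((n - 1) / 2)

lemma Phi_two_mul (c : ℝ) (m : ℕ) : Phi c (2 * m) = fun x => (x ^ 2 - c ^ 2) ^ m := by
  funext x
  simp [Phi]

lemma Phi_two_mul_add_one (c : ℝ) (m : ℕ) :
    Phi c (2 * m + 1) = fun x => (x + c) * (x ^ 2 - c ^ 2) ^ m := by
  funext x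
  simp [Phi]

lemma hasDerivAt_sq_sub_sq_pow (c : ℝ) (m : ℕ) (x : ℝ) :
    HasDerivAt (fun x => (x ^ 2 - c ^ 2) ^ m) (m * (x ^ 2 - c ^ 2) ^ (m - 1) * (2 * x)) x := by
  have hbase : HasDerivAt (fun x => x ^ 2 - c ^ 2) (2 * x) x := by
    simpa using (hasDerivAt_pow 2 x).sub_const (c ^ 2)
  exact hbase.pow m

lemma hasDerivAt_Phi_two_mul_add_one (c : ℝ) (m : ℕ) (x : ℝ) :
    HasDerivAt (Phi c (2 * m + 1))
      ((x ^ 2 - c ^ 2) ^ m + (x + c) * (m * (x ^ 2 - c ^ 2) ^ (m - 1) * (2 * x))) x := by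
  rw [Phi_two_mul_add_one]
  exact (((hasDerivAt_id x).add_const c).mul (hasDerivAt_sq_sub_sq_pow c m x)).congr_deriv
    (by simp)

lemma Dop_of_even (β c : ℝ) {f : ℝ → ℝ} (hf : ∀ x, f (-x) = f x) {x : ℝ} (hx : x ≠ 0) :
    Dop β c f x = (1 - c) * (x + c) / x * deriv f x := by
  have hderiv : deriv f (-x) = -deriv f x := by
    rw [← neg_neg (deriv f (-x)), ← deriv_comp_neg, funext hf]
  rw [Dop, hf, hderiv]
  field_simp
  ring

lemma Dop_Phi_two_mul_add_two (β c : ℝ) (m : ℕ) {x : ℝ} (hx : x ≠ 0) :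
    Dop β c (Phi c (2 * m + 2)) x = (1 - c) * (2 * m + 2) * Phi c (2 * m + 1) x := by
  have hPhi : Phi c (2 * m + 2) = fun x => (x ^ 2 - c ^ 2) ^ (m + 1) := Phi_two_mul c (m + 1)
  rw [Dop_of_even β c (by simp [hPhi]) hx, hPhi, (hasDerivAt_sq_sub_sq_pow c (m + 1) x).deriv,
    Phi_two_mul_add_one]
  push_cast
  field_simp

lemma Dop_Phi_two_mul_add_one (β c : ℝ) (m : ℕ) {x : ℝ} (hx : x ≠ 0) :
    Dop β c (Phi c (2 * m + 1)) x = (c + 1) * (β + (2 * m + 1)) * Phi c (2 * m) x := by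
  rw [Dop, (hasDerivAt_Phi_two_mul_add_one c m x).deriv,
    (hasDerivAt_Phi_two_mul_add_one c m (-x)).deriv, Phi_two_mul_add_one, Phi_two_mul]
  rcases m with _ | k
  · simp only [neg_sq, pow_zero]
    field_simp
    ring
  · simp only [pow_succ, Nat.add_sub_cancel]
    push_cast
    field_simp
    ring

/-- The generalized Dunkl operator acts on the canonical basis by
`𝔇 Φ_n = ν_n Φ_{n-1}` (with the convention `Φ_{-1} = 0`, automatic here since
`ν_0 = 0`), where `ν_n = (1-c)n` for even `n` and `ν_n = (c+1)(β+n)` for odd `n`. -/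
theorem D_on_Phi (β c : ℝ) (n : ℕ) (x : ℝ) (hx : x ≠ 0) :
    Dop β c (Phi c n) x =
      (if Even n then (1 - c) * (n : ℝ) else (c + 1) * (β + n)) * Phi c (n - 1) x := by
  obtain ⟨m, rfl | rfl⟩ := Nat.even_or_odd' n
  · rw [if_pos (even_two_mul m)]
    rcases m with _ | k
    · -- `0 - 1` truncates to `0`, so `Φ_{-1}` reads as `Φ_0`, but `ν_0 = 0`.
      rw [Phi_two_mul]
      simp [Dop]
    · rw [show 2 * (k + 1) = 2 * k + 2 by ring, Dop_Phi_two_mul_add_two β c k hx]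
      push_cast
      ring
  · rw [if_neg (Nat.not_even_two_mul_add_one m), Dop_Phi_two_mul_add_one β c m hx,
      Nat.add_sub_cancel]
    push_cast
    ring
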